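/- In the inverse limit 𝕆(P) of the down-set lattices O(P_n), any countable family A = {(↓x_1^{(i)}, ↓x_2^{(i)}, …) : i ∈ ω} of principal elements has a supremum, given coordinatewise by (⋃_i ↓x_1^{(i)}, ⋃_i ↓x_2^{(i)}, …); moreover every nonzero element of 𝕆(P) is the supremum of a countable family of principal elements. Consequently 𝕆(P) is σ-complete. -/

import Mathlib

/-- A quotient map of posets. -/
def IsPosetQuotient {A B : Type*} [Preorder A] [Preorder B] (f : A → B) : Prop :=
  Function.Surjective f ∧ Monotone f ∧
    ∀ p r : B, p ≤ r → ∃ x y : A, x ≤ y ∧ f x = p ∧ f y = r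

/-- The induced map on down-sets, via the canonical decomposition into principal
down-sets of maximal elements. -/
def inducedMap {Q P : Type*} [Preorder Q] [Preorder P] (p : Q → P) (A : Set Q) : Set P :=
  ⋃ a ∈ {a ∈ A | ∀ b ∈ A, a ≤ b → a = b}, Set.Iic (p a)

/-- Membership in the inverse limit `𝕆(P)` of the down-set lattices `O(P n)`. -/
def InOLim (P : ℕ → Type*) [∀ n, PartialOrder (P n)] (p : ∀ n, P (n + 1) → P n)
    (a : ∀ n, Set (P n)) : Prop :=
  (∀ n, IsLowerSet (a n)) ∧ ∀ n, inducedMap (p n) (a (n + 1)) = a n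

/-- Membership in the inverse limit `P` of the posets `P n`: a thread. -/
def InPLim (P : ℕ → Type*) (p : ∀ n, P (n + 1) → P n) (x : ∀ n, P n) : Prop :=
  ∀ n, p n (x (n + 1)) = x n

/-!
For a monotone map out of a finite poset, `inducedMap p A` is the down-closure of `p '' A`, since
every element of `A` lies below a maximal one. Hence every element `a` of `𝕆(P)` satisfies
`c ∈ a n ↔ ∃ b ∈ a (n + 1), c ≤ p n b`. By Kőnig's lemma for inverse systems of nonempty finite
sets, every `c ∈ a n` then lies below the `n`-th coordinate of a thread contained in `a`, so `a`
is the union of the principal elements given by the threads it contains; countably many of them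
suffice because `Σ n, P n` is countable. The supremum (infimum) of any family in `𝕆(P)` is the
union of the principal elements given by the threads lying in some (every) member.
-/

open CategoryTheory Opposite Set

theorem mem_inducedMap_iff {Q R : Type*} [PartialOrder Q] [Finite Q] [Preorder R] {p : Q → R}
    (hp : Monotone p) {A : Set Q} {y : R} : y ∈ inducedMap p A ↔ ∃ b ∈ A, y ≤ p b := by
  simp only [inducedMap, mem_iUnion, mem_Iic, exists_prop]
  constructor
  · rintro ⟨b, ⟨hb, -⟩, hyb⟩
    exact ⟨b, hb, hyb⟩
  · rintro ⟨b, hb, hyb⟩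
    obtain ⟨m, hbm, hm⟩ := Finite.exists_le_maximal hb
    exact ⟨m, ⟨hm.1, fun c hc hmc => le_antisymm hmc (hm.2 hc hmc)⟩, hyb.trans (hp hbm)⟩

theorem exists_thread_of_mapsTo {X : ℕ → Type*} [∀ n, Finite (X n)] (f : ∀ n, X (n + 1) → X n)
    {S : ∀ n, Set (X n)} (hmaps : ∀ n, MapsTo (f n) (S (n + 1)) (S n))
    (hne : ∀ n, (S n).Nonempty) :
    ∃ x : ∀ n, X n, (∀ n, f n (x (n + 1)) = x n) ∧ ∀ n, x n ∈ S n := by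
  let F := Functor.ofOpSequence (C := Type _) (X := fun n => S n)
    (fun n => TypeCat.ofHom (hmaps n).restrict)
  have (j : ℕᵒᵖ) : Finite (F.obj j) := Subtype.finite
  have (j : ℕᵒᵖ) : Nonempty (F.obj j) := (hne j.unop).to_subtype
  obtain ⟨u, hu⟩ := nonempty_sections_of_finite_inverse_system F
  refine ⟨fun n => (u (op n)).1, fun n => ?_, fun n => (u (op n)).2⟩
  have hstep := hu (homOfLE (Nat.le_add_right n 1)).op
  rw [Functor.ofOpSequence_map_homOfLE_succ] at hstep
  exact congrArg Subtype.val hstep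

section Threads

variable {P : ℕ → Type*} [∀ n, PartialOrder (P n)] [∀ n, Finite (P n)]
  {p : ∀ n, P (n + 1) → P n} {a : ∀ n, Set (P n)}

theorem InOLim.mem_iff (ha : InOLim P p a) (hmono : ∀ n, Monotone (p n)) {n : ℕ} {c : P n} :
    c ∈ a n ↔ ∃ b ∈ a (n + 1), c ≤ p n b := by
  rw [← ha.2 n, mem_inducedMap_iff (hmono n)]

theorem InOLim.mapsTo (ha : InOLim P p a) (hmono : ∀ n, Monotone (p n)) (n : ℕ) :
    MapsTo (p n) (a (n + 1)) (a n) :=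
  fun b hb => (ha.mem_iff hmono).2 ⟨b, hb, le_rfl⟩

theorem InOLim.exists_thread_ge_zero (ha : InOLim P p a) (hmono : ∀ n, Monotone (p n))
    {c : P 0} (hc : c ∈ a 0) :
    ∃ x : ∀ n, P n, InPLim P p x ∧ (∀ n, x n ∈ a n) ∧ c ≤ x 0 := by
  -- `S n` is the set of points of `a n` whose projection to level `0` lies above `c`.
  let S : ∀ n, Set (P n) :=
    fun n => Nat.rec (motive := fun n => Set (P n)) (a 0 ∩ Ici c)
      (fun k s => a (k + 1) ∩ p k ⁻¹' s) n
  have hSa : ∀ n, S n ⊆ a n := by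
    rintro (_ | n) y hy <;> exact hy.1
  have hS_up : ∀ n y z, y ∈ S n → y ≤ z → z ∈ a n → z ∈ S n := by
    intro n
    induction n with
    | zero => exact fun y z hy hyz hz => ⟨hz, le_trans hy.2 hyz⟩
    | succ n ih =>
      exact fun y z hy hyz hz => ⟨hz, ih _ _ hy.2 (hmono n hyz) (ha.mapsTo hmono n hz)⟩
  have hS_ne : ∀ n, (S n).Nonempty := by
    intro n
    induction n with
    | zero => exact ⟨c, hc, le_rfl⟩
    | succ n ih =>
      obtain ⟨y, hy⟩ := ih
      obtain ⟨b, hb, hyb⟩ := (ha.mem_iff hmono).1 (hSa n hy)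
      exact ⟨b, hb, hS_up n y _ hy hyb (ha.mapsTo hmono n hb)⟩
  obtain ⟨x, hx, hxS⟩ := exists_thread_of_mapsTo p (S := S) (fun n _ hy => hy.2) hS_ne
  exact ⟨x, hx, fun n => hSa n (hxS n), (hxS 0).2⟩

theorem InOLim.exists_thread_ge (ha : InOLim P p a) (hmono : ∀ n, Monotone (p n)) {n : ℕ}
    {c : P n} (hc : c ∈ a n) :
    ∃ x : ∀ k, P k, InPLim P p x ∧ (∀ k, x k ∈ a k) ∧ c ≤ x n := by
  induction n generalizing P with
  | zero => exact ha.exists_thread_ge_zero hmono hc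
  | succ n ih =>
    have ha' : InOLim (fun k => P (k + 1)) (fun k => p (k + 1)) (fun k => a (k + 1)) :=
      ⟨fun k => ha.1 (k + 1), fun k => ha.2 (k + 1)⟩
    obtain ⟨y, hy, hya, hcy⟩ := ih ha' (fun k => hmono (k + 1)) hc
    refine ⟨fun | 0 => p 0 (y 0) | k + 1 => y k, ?_, ?_, hcy⟩
    · rintro (_ | k)
      exacts [rfl, hy k]
    · rintro (_ | k)
      exacts [ha.mapsTo hmono 0 (hya 0), hya k]

theorem inOLim_iUnion_Iic (hmono : ∀ n, Monotone (p n)) {ι : Sort*} {x : ι → ∀ n, P n}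
    (hx : ∀ i, InPLim P p (x i)) : InOLim P p (fun n => ⋃ i, Iic (x i n)) := by
  refine ⟨fun n => isLowerSet_iUnion fun i => isLowerSet_Iic _, fun n => ?_⟩
  ext y
  simp only [mem_inducedMap_iff (hmono n), mem_iUnion, mem_Iic]
  constructor
  · rintro ⟨b, ⟨i, hbi⟩, hyb⟩
    exact ⟨i, hx i n ▸ hyb.trans (hmono n hbi)⟩
  · rintro ⟨i, hyi⟩
    exact ⟨x i (n + 1), ⟨i, le_rfl⟩, (hx i n).symm ▸ hyi⟩

theorem InOLim.exists_seq_iUnion_Iic_eq (ha : InOLim P p a) (hmono : ∀ n, Monotone (p n))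
    (hne : ∃ n, (a n).Nonempty) :
    ∃ x : ℕ → ∀ n, P n, (∀ i, InPLim P p (x i)) ∧ ∀ n, a n = ⋃ i, Iic (x i n) := by
  obtain ⟨m, c₀, hc₀⟩ := hne
  have : Nonempty {q : Σ n, P n // q.2 ∈ a q.1} := ⟨⟨⟨m, c₀⟩, hc₀⟩⟩
  obtain ⟨g, hg⟩ := exists_surjective_nat {q : Σ n, P n // q.2 ∈ a q.1}
  choose x hx hxa hqx using fun q : {q : Σ n, P n // q.2 ∈ a q.1} => ha.exists_thread_ge hmono q.2
  refine ⟨fun i => x (g i), fun i => hx _, fun n => subset_antisymm (fun c hc => ?_) ?_⟩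
  · obtain ⟨i, hi⟩ := hg ⟨⟨n, c⟩, hc⟩
    refine mem_iUnion.2 ⟨i, ?_⟩
    show c ≤ x (g i) n
    rw [hi]
    exact hqx ⟨⟨n, c⟩, hc⟩
  · exact iUnion_subset fun i => (ha.1 n).Iic_subset (hxa _ n)

theorem exists_isLeast_inOLim_upperBound (hmono : ∀ n, Monotone (p n)) {ι : Sort*}
    {A : ι → ∀ n, Set (P n)} (hA : ∀ i, InOLim P p (A i)) :
    ∃ s : ∀ n, Set (P n), InOLim P p s ∧ (∀ i n, A i n ⊆ s n) ∧
      ∀ t : ∀ n, Set (P n), InOLim P p t → (∀ i n, A i n ⊆ t n) → ∀ n, s n ⊆ t n := by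
  refine ⟨fun n => ⋃ x : {x : ∀ k, P k // InPLim P p x ∧ ∃ i, ∀ k, x k ∈ A i k}, Iic (x.1 n),
    inOLim_iUnion_Iic hmono fun x => x.2.1, fun i n c hc => ?_, fun t ht hAt n => ?_⟩
  · obtain ⟨x, hx, hxA, hcx⟩ := (hA i).exists_thread_ge hmono hc
    exact mem_iUnion.2 ⟨⟨x, hx, i, hxA⟩, hcx⟩
  · exact iUnion_subset fun ⟨x, _, i, hxA⟩ => (ht.1 n).Iic_subset (hAt i n (hxA n))

theorem exists_isGreatest_inOLim_lowerBound (hmono : ∀ n, Monotone (p n)) {ι : Sort*}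
    {A : ι → ∀ n, Set (P n)} (hA : ∀ i, InOLim P p (A i)) :
    ∃ r : ∀ n, Set (P n), InOLim P p r ∧ (∀ i n, r n ⊆ A i n) ∧
      ∀ t : ∀ n, Set (P n), InOLim P p t → (∀ i n, t n ⊆ A i n) → ∀ n, t n ⊆ r n := by
  refine ⟨fun n => ⋃ x : {x : ∀ k, P k // InPLim P p x ∧ ∀ i k, x k ∈ A i k}, Iic (x.1 n),
    inOLim_iUnion_Iic hmono fun x => x.2.1, fun i n => ?_, fun t ht htA n c hc => ?_⟩
  · exact iUnion_subset fun ⟨x, _, hxA⟩ => ((hA i).1 n).Iic_subset (hxA i n)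
  · obtain ⟨x, hx, hxt, hcx⟩ := ht.exists_thread_ge hmono hc
    exact mem_iUnion.2 ⟨⟨x, hx, fun i k => htA i k (hxt k)⟩, hcx⟩

end Threads

/-- in `𝕆(P)`, every countable family of principal elements
`(↓x₁⁽ⁱ⁾, ↓x₂⁽ⁱ⁾, …)` has a supremum, given coordinatewise by unions; every
nonzero element of `𝕆(P)` is such a supremum of countably many principal
elements; and consequently `𝕆(P)` is σ-complete. -/
theorem stmt_18 (P : ℕ → Type*) [∀ n, PartialOrder (P n)] [∀ n, Fintype (P n)]
    (p : ∀ n, P (n + 1) → P n) (hp : ∀ n, IsPosetQuotient (p n)) :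
    (∀ x : ℕ → ∀ n, P n, (∀ i, InPLim P p (x i)) →
      InOLim P p (fun n => ⋃ i : ℕ, Set.Iic (x i n)) ∧
      (∀ i n, Set.Iic (x i n) ⊆ ⋃ j : ℕ, Set.Iic (x j n)) ∧
      ∀ s : ∀ n, Set (P n), InOLim P p s → (∀ i n, Set.Iic (x i n) ⊆ s n) →
        ∀ n, (⋃ i : ℕ, Set.Iic (x i n)) ⊆ s n) ∧
    (∀ a : ∀ n, Set (P n), InOLim P p a → a ≠ (fun n => (∅ : Set (P n))) →
      ∃ x : ℕ → ∀ n, P n, (∀ i, InPLim P p (x i)) ∧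
        ∀ n, a n = ⋃ i : ℕ, Set.Iic (x i n)) ∧
    (∀ A : ℕ → ∀ n, Set (P n), (∀ i, InOLim P p (A i)) →
      (∃ s : ∀ n, Set (P n), InOLim P p s ∧ (∀ i n, A i n ⊆ s n) ∧
        ∀ t : ∀ n, Set (P n), InOLim P p t → (∀ i n, A i n ⊆ t n) → ∀ n, s n ⊆ t n) ∧
      (∃ r : ∀ n, Set (P n), InOLim P p r ∧ (∀ i n, r n ⊆ A i n) ∧
        ∀ t : ∀ n, Set (P n), InOLim P p t → (∀ i n, t n ⊆ A i n) → ∀ n, t n ⊆ r n)) := by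
  have hmono : ∀ n, Monotone (p n) := fun n => (hp n).2.1
  refine ⟨fun x hx => ⟨inOLim_iUnion_Iic hmono hx,
      fun i n => subset_iUnion (fun j => Iic (x j n)) i,
      fun s _ hxs n => iUnion_subset fun i => hxs i n⟩,
    fun a ha hane => ha.exists_seq_iUnion_Iic_eq hmono ?_,
    fun A hA => ⟨exists_isLeast_inOLim_upperBound hmono hA,
      exists_isGreatest_inOLim_lowerBound hmono hA⟩⟩
  obtain ⟨n, hn⟩ := Function.ne_iff.1 hane
  exact ⟨n, nonempty_iff_ne_empty.2 hn⟩
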